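/- arXiv:2601.01342 — 2 statements merged into one kernel-verified Lean document; each statement's English description precedes it below -/
import Mathlib

section
/- Suppose at each step a row index j is chosen with probability ‖a_j‖₂²/‖A‖_F², and x' is the λ = 1 Kaczmarz update from x using row j. If A x_sol = b, then the expected squared error satisfies E[‖x' - x_sol‖₂²] ≤ (1 - σ_min(A)²/‖A‖_F²) ‖x - x_sol‖₂², where σ_min(A) is the smallest singular value of A. -/
/-- The Kaczmarz update with relaxation parameter λ = 1. -/
noncomputable def kaczmarzUpdate {m : ℕ} (a x : EuclideanSpace ℝ (Fin m)) (b : ℝ) :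
    EuclideanSpace ℝ (Fin m) :=
  x + ((b - (inner ℝ a x : ℝ)) / ‖a‖ ^ 2) • a

/-!
If `⟪a_j, x_sol⟫ = b_j`, the update from `x` with row `j` moves the error `e = x - x_sol` to its
orthogonal projection onto `a_jᗮ`, so by Pythagoras `‖a_j‖² ‖x' - x_sol‖² = ‖a_j‖² ‖e‖² - ⟪a_j, e⟫²`.
Weighting by `‖a_j‖² / ‖A‖_F²` clears the denominators, and the expected error is
`‖e‖² - ‖A e‖² / ‖A‖_F² ≤ (1 - σ² / ‖A‖_F²) ‖e‖²`.
-/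

open scoped RealInnerProductSpace

section InnerProductSpace

variable {E : Type*} [NormedAddCommGroup E] [InnerProductSpace ℝ E]

/-- Pythagoras for the projection of `e` onto `aᗮ`, multiplied through by `‖a‖²` so that it
also holds (as `0 = 0`) for `a = 0`. -/
theorem sq_norm_mul_sq_norm_sub_inner_div_smul (a e : E) :
    ‖a‖ ^ 2 * ‖e - (⟪a, e⟫ / ‖a‖ ^ 2) • a‖ ^ 2 = ‖a‖ ^ 2 * ‖e‖ ^ 2 - ⟪a, e⟫ ^ 2 := by
  rcases eq_or_ne a 0 with rfl | ha
  · simp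
  have hna : ‖a‖ ≠ 0 := norm_ne_zero_iff.mpr ha
  rw [norm_sub_sq_real, inner_smul_right, norm_smul, real_inner_comm, mul_pow,
    Real.norm_eq_abs, sq_abs]
  field_simp
  ring

end InnerProductSpace

section Kaczmarz

variable {m : ℕ} (a x xsol : EuclideanSpace ℝ (Fin m)) {b : ℝ}

theorem kaczmarzUpdate_sub_of_inner_eq (hb : ⟪a, xsol⟫ = b) :
    kaczmarzUpdate a x b - xsol = (x - xsol) - (⟪a, x - xsol⟫ / ‖a‖ ^ 2) • a := by
  have hres : b - ⟪a, x⟫ = -⟪a, x - xsol⟫ := by rw [inner_sub_right, hb]; ring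
  rw [kaczmarzUpdate, hres, neg_div, neg_smul]
  abel

theorem sq_norm_mul_sq_norm_kaczmarzUpdate_sub (hb : ⟪a, xsol⟫ = b) :
    ‖a‖ ^ 2 * ‖kaczmarzUpdate a x b - xsol‖ ^ 2
      = ‖a‖ ^ 2 * ‖x - xsol‖ ^ 2 - ⟪a, x - xsol⟫ ^ 2 := by
  rw [kaczmarzUpdate_sub_of_inner_eq a x xsol hb, sq_norm_mul_sq_norm_sub_inner_div_smul]

end Kaczmarz

theorem randomized_kaczmarz_expected_contraction_general {n m : ℕ}
    (a : Fin n → EuclideanSpace ℝ (Fin m))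
    (b : Fin n → ℝ) (xsol x : EuclideanSpace ℝ (Fin m))
    (hsol : ∀ j, (inner ℝ (a j) xsol : ℝ) = b j)
    (σ : ℝ)
    (hσ : ∀ v : EuclideanSpace ℝ (Fin m),
      σ ^ 2 * ‖v‖ ^ 2 ≤ ∑ j, (inner ℝ (a j) v : ℝ) ^ 2) :
    ∑ j, (‖a j‖ ^ 2 / (∑ i, ‖a i‖ ^ 2)) * ‖kaczmarzUpdate (a j) x (b j) - xsol‖ ^ 2
      ≤ (1 - σ ^ 2 / (∑ i, ‖a i‖ ^ 2)) * ‖x - xsol‖ ^ 2 := by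
  set S := ∑ i, ‖a i‖ ^ 2
  set e := x - xsol
  have hS : 0 ≤ S := Finset.sum_nonneg fun i _ => by positivity
  calc ∑ j, (‖a j‖ ^ 2 / S) * ‖kaczmarzUpdate (a j) x (b j) - xsol‖ ^ 2
      = ∑ j, (‖a j‖ ^ 2 * ‖e‖ ^ 2 - ⟪a j, e⟫ ^ 2) / S := by
        refine Finset.sum_congr rfl fun j _ => ?_
        rw [div_mul_eq_mul_div, sq_norm_mul_sq_norm_kaczmarzUpdate_sub _ _ _ (hsol j)]
    _ = (S * ‖e‖ ^ 2 - ∑ j, ⟪a j, e⟫ ^ 2) / S := by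
        rw [← Finset.sum_div, Finset.sum_sub_distrib, ← Finset.sum_mul]
    _ ≤ (1 - σ ^ 2 / S) * ‖e‖ ^ 2 := by
        have hσe := div_le_div_of_nonneg_right (hσ e) hS
        -- `S / S ≤ 1` rather than `= 1` covers the empty system `S = 0`
        linear_combination hσe + ‖e‖ ^ 2 * div_self_le_one S

/-- One step of randomized Kaczmarz: choosing row `j` with probability `‖a_j‖²/‖A‖_F²`
and performing the λ = 1 update, if `A x_sol = b` and `σ` is a lower bound on the
singular values of `A` (i.e. `σ²‖v‖² ≤ ‖A v‖²` for all `v`), then the expected squared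
error contracts: `E‖x' - x_sol‖² ≤ (1 - σ²/‖A‖_F²) ‖x - x_sol‖²`. -/
theorem randomized_kaczmarz_expected_contraction {n m : ℕ} (hn : 0 < n)
    (a : Fin n → EuclideanSpace ℝ (Fin m)) (ha : ∀ j, a j ≠ 0)
    (b : Fin n → ℝ) (xsol x : EuclideanSpace ℝ (Fin m))
    (hsol : ∀ j, (inner ℝ (a j) xsol : ℝ) = b j)
    (σ : ℝ)
    (hσ : ∀ v : EuclideanSpace ℝ (Fin m),
      σ ^ 2 * ‖v‖ ^ 2 ≤ ∑ j, (inner ℝ (a j) v : ℝ) ^ 2) :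
    ∑ j, (‖a j‖ ^ 2 / (∑ i, ‖a i‖ ^ 2)) * ‖kaczmarzUpdate (a j) x (b j) - xsol‖ ^ 2
      ≤ (1 - σ ^ 2 / (∑ i, ‖a i‖ ^ 2)) * ‖x - xsol‖ ^ 2 :=
  randomized_kaczmarz_expected_contraction_general a b xsol x hsol σ hσ
end

section
/- If U is a block encoding of matrices A₁ (with a ancillas) and V is a block encoding of A₂ (with the same ancilla structure), then the product construction yields a block encoding of A₁ A₂: specifically, (⟨0|^{⊗a} ⊗ I) U' V' (|0⟩^{⊗a’} ⊗ I) = A₁ A₂ where U', V' act on appropriately enlarged ancilla spaces with fresh ancillas for each encoding. -/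
/-! Projecting the outer ancilla of `W` onto `|0⟩` turns `I ⊗ U` into `U` and the swapped
`I ⊗ V` into `I ⊗ A₂`, because the swap brings `V`'s ancilla to the outside. Projecting the
remaining ancilla then turns `U * (I ⊗ A₂)` into `A₁ * A₂`. -/

open Matrix Kronecker

/-- The zero basis state of an `a`-qubit ancilla register. -/
def ancZero (a : ℕ) : Fin (2 ^ a) := ⟨0, Nat.two_pow_pos a⟩

/-- The swap of the two ancilla registers (keeping the main register fixed). -/
def ancSwap (α β γ : Type*) : α × (β × γ) ≃ β × (α × γ) :=
  ((Equiv.prodAssoc α β γ).symm.trans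
    ((Equiv.prodComm α β).prodCongr (Equiv.refl γ))).trans (Equiv.prodAssoc β α γ)

/-- `(⟨a₀| ⊗ I) M (|a₀⟩ ⊗ I)`. -/
def Matrix.corner {α γ R : Type*} (a₀ : α) (M : Matrix (α × γ) (α × γ) R) : Matrix γ γ R :=
  M.submatrix (Prod.mk a₀) (Prod.mk a₀)

namespace Matrix.corner

variable {α β γ R : Type*} [DecidableEq α] [NonAssocSemiring R]

theorem reindex_ancSwap_one_kronecker (b₀ : β) (V : Matrix (β × γ) (β × γ) R) :
    corner b₀ (reindex (ancSwap α β γ) (ancSwap α β γ) ((1 : Matrix α α R) ⊗ₖ V)) =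
      1 ⊗ₖ corner b₀ V := by
  ext ⟨a, x⟩ ⟨a', y⟩
  rfl

variable [Fintype α] [Fintype γ]

theorem one_kronecker_mul (a₀ : α) (U : Matrix γ γ R) (M : Matrix (α × γ) (α × γ) R) :
    corner a₀ ((1 ⊗ₖ U) * M) = U * corner a₀ M := by
  ext x y
  simp [corner, mul_apply, Fintype.sum_prod_type, one_apply]

theorem mul_one_kronecker (a₀ : α) (M : Matrix (α × γ) (α × γ) R) (B : Matrix γ γ R) :
    corner a₀ (M * (1 ⊗ₖ B)) = corner a₀ M * B := by
  ext x y
  simp [corner, mul_apply, Fintype.sum_prod_type, one_apply]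

end Matrix.corner

theorem product_block_encoding_general {a b N : ℕ}
    (U : Matrix (Fin (2 ^ a) × Fin N) (Fin (2 ^ a) × Fin N) ℂ)
    (V : Matrix (Fin (2 ^ b) × Fin N) (Fin (2 ^ b) × Fin N) ℂ)
    (A₁ A₂ : Matrix (Fin N) (Fin N) ℂ)
    (hUA : ∀ i j, U (ancZero a, i) (ancZero a, j) = A₁ i j)
    (hVA : ∀ i j, V (ancZero b, i) (ancZero b, j) = A₂ i j) :
    ∀ i j,
      (((1 : Matrix (Fin (2 ^ b)) (Fin (2 ^ b)) ℂ) ⊗ₖ U) *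
        (Matrix.reindex (ancSwap (Fin (2 ^ a)) (Fin (2 ^ b)) (Fin N))
          (ancSwap (Fin (2 ^ a)) (Fin (2 ^ b)) (Fin N))
          ((1 : Matrix (Fin (2 ^ a)) (Fin (2 ^ a)) ℂ) ⊗ₖ V)))
        (ancZero b, (ancZero a, i)) (ancZero b, (ancZero a, j)) = (A₁ * A₂) i j := by
  have hA₁ : corner (ancZero a) U = A₁ := Matrix.ext hUA
  have hA₂ : corner (ancZero b) V = A₂ := Matrix.ext hVA
  intro i j
  change corner (ancZero a) (corner (ancZero b)
    ((1 ⊗ₖ U) * reindex (ancSwap _ _ _) (ancSwap _ _ _) (1 ⊗ₖ V))) i j = _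
  rw [corner.one_kronecker_mul, corner.reindex_ancSwap_one_kronecker, corner.mul_one_kronecker,
    hA₁, hA₂]

/-- Product of block encodings: if `U` block-encodes `A₁` (with `a` ancilla qubits) and
`V` block-encodes `A₂` (with `b` fresh ancilla qubits), then
`W = (I ⊗ U) · (swap of ancilla registers applied to I ⊗ V)` is a block encoding of the
product `A₁ A₂`. -/
theorem product_block_encoding {a b N : ℕ}
    (U : Matrix (Fin (2 ^ a) × Fin N) (Fin (2 ^ a) × Fin N) ℂ)
    (V : Matrix (Fin (2 ^ b) × Fin N) (Fin (2 ^ b) × Fin N) ℂ)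
    (hU : U ∈ Matrix.unitaryGroup (Fin (2 ^ a) × Fin N) ℂ)
    (hV : V ∈ Matrix.unitaryGroup (Fin (2 ^ b) × Fin N) ℂ)
    (A₁ A₂ : Matrix (Fin N) (Fin N) ℂ)
    (hUA : ∀ i j, U (ancZero a, i) (ancZero a, j) = A₁ i j)
    (hVA : ∀ i j, V (ancZero b, i) (ancZero b, j) = A₂ i j) :
    ∀ i j,
      (((1 : Matrix (Fin (2 ^ b)) (Fin (2 ^ b)) ℂ) ⊗ₖ U) *
        (Matrix.reindex (ancSwap (Fin (2 ^ a)) (Fin (2 ^ b)) (Fin N))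
          (ancSwap (Fin (2 ^ a)) (Fin (2 ^ b)) (Fin N))
          ((1 : Matrix (Fin (2 ^ a)) (Fin (2 ^ a)) ℂ) ⊗ₖ V)))
        (ancZero b, (ancZero a, i)) (ancZero b, (ancZero a, j)) = (A₁ * A₂) i j :=
  product_block_encoding_general U V A₁ A₂ hUA hVA
end
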